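/- arXiv:2402.08033 — 2 statements merged into one kernel-verified Lean document; each statement's English description precedes it below -/
import Mathlib

section
/- If α < 1/2 (and α ≥ 0), then with v_n = Σ_{k=1}^n a_k^2 and a_k = Γ(k)Γ(α+1)/Γ(k+α), the ratio v_n / n^{1-2α} converges to Γ(α+1)^2/(1-2α) as n → ∞. -/
/-!
Euler's limit formula for `Γ` gives `a_k ∼ Γ(α + 1) k ^ (-α)`, so
`a_k ^ 2 ∼ Γ(α + 1) ^ 2 k ^ (-2α)`. Since `p = 1 - 2α > 0`, the increments
`(k + 1) ^ p - k ^ p ∼ p k ^ (-2α)` have partial sums `n ^ p` tending to infinity, and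
Stolz–Cesàro against them gives `v_n ∼ Γ(α + 1) ^ 2 n ^ p / p`.
-/

open Real Finset Filter Asymptotics Topology

namespace Real

theorem Gamma_add_nat_eq_mul_prod {x : ℝ} (hx : ∀ m : ℕ, x ≠ -m) (n : ℕ) :
    Gamma (x + n) = Gamma x * ∏ j ∈ range n, (x + j) := by
  induction n with
  | zero => simp
  | succ n ih =>
    have hxn : x + n ≠ 0 := fun h => hx n (by linarith)
    rw [Nat.cast_succ, ← add_assoc, Gamma_add_one hxn, ih, prod_range_succ]
    ring

theorem GammaSeq_eq_mul_Gamma_div_Gamma {x : ℝ} (hx : ∀ m : ℕ, x ≠ -m) (n : ℕ) :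
    GammaSeq x n = (n : ℝ) ^ x * Gamma (n + 1) * Gamma x / Gamma (x + (n + 1)) := by
  have hΓ : Gamma x ≠ 0 := Gamma_ne_zero hx
  rw [GammaSeq, Gamma_nat_eq_factorial, ← Nat.cast_succ, Gamma_add_nat_eq_mul_prod hx]
  field_simp

theorem tendsto_Gamma_mul_rpow_div_Gamma_add {x : ℝ} (hx : 0 ≤ x) :
    Tendsto (fun n : ℕ => Gamma n * (n : ℝ) ^ x / Gamma (n + x)) atTop (𝓝 1) := by
  -- Euler's limit formula says nothing at `x = 0`, where `Γ 0 = 0` in Mathlib.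
  rcases hx.eq_or_lt with rfl | hx
  · refine tendsto_const_nhds.congr' ?_
    filter_upwards [eventually_ge_atTop 1] with n hn
    have : Gamma n ≠ 0 := (Gamma_pos_of_pos (by exact_mod_cast hn)).ne'
    simp [this]
  have hx' : ∀ m : ℕ, x ≠ -m := fun m h => by linarith [(Nat.cast_nonneg m : (0 : ℝ) ≤ m)]
  have hΓ : Gamma x ≠ 0 := (Gamma_pos_of_pos hx).ne'
  have hshift : Tendsto (fun n : ℕ => 1 + x / n) atTop (𝓝 1) := by
    simpa using (tendsto_const_div_atTop_nhds_zero_nat x).const_add 1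
  have hlim := ((GammaSeq_tendsto_Gamma x).div_const (Gamma x)).mul hshift
  rw [div_self hΓ, one_mul] at hlim
  refine hlim.congr' ?_
  filter_upwards [eventually_ge_atTop 1] with n hn
  have hn : (0 : ℝ) < n := by exact_mod_cast hn
  have hxn : (0 : ℝ) < x + n := by linarith
  rw [GammaSeq_eq_mul_Gamma_div_Gamma hx', Gamma_add_one hn.ne', ← add_assoc,
    Gamma_add_one hxn.ne', add_comm (n : ℝ) x]
  have := (Gamma_pos_of_pos hxn).ne'
  field_simp
  ring

end Real

theorem tendsto_sum_range_div_sum_range_of_tendsto_div {c w : ℕ → ℝ} {L : ℝ}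
    (hw : ∀ k, 0 < w k) (hw_sum : Tendsto (fun n => ∑ k ∈ range n, w k) atTop atTop)
    (h : Tendsto (fun k => c k / w k) atTop (𝓝 L)) :
    Tendsto (fun n => (∑ k ∈ range n, c k) / ∑ k ∈ range n, w k) atTop (𝓝 L) := by
  have herr : (fun k => c k - L * w k) =o[atTop] w := by
    rw [isLittleO_iff_tendsto fun k hk => absurd hk (hw k).ne']
    have h₀ := h.sub_const L
    rw [sub_self] at h₀
    exact h₀.congr fun k => by rw [sub_div, mul_div_cancel_right₀ _ (hw k).ne']
  have hlim := (herr.sum_range (fun k => (hw k).le) hw_sum).tendsto_div_nhds_zero.add_const L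
  rw [zero_add] at hlim
  refine hlim.congr' ?_
  filter_upwards [eventually_ge_atTop 1] with n hn
  have hpos : 0 < ∑ k ∈ range n, w k :=
    sum_pos (fun k _ => hw k) (nonempty_range_iff.2 (by omega))
  rw [sum_sub_distrib, ← mul_sum, sub_div, mul_div_cancel_right₀ _ hpos.ne', sub_add_cancel]

theorem tendsto_natCast_add_one_mul_one_sub_rpow (p : ℝ) :
    Tendsto (fun k : ℕ => ((k : ℝ) + 1) * (1 - ((k : ℝ) / (k + 1)) ^ p)) atTop (𝓝 p) := by
  -- the slope of `t ↦ t ^ p` at `1`, sampled at `t = k / (k + 1)`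
  have hslope := hasDerivAt_iff_tendsto_slope.1
    (hasDerivAt_rpow_const (x := 1) (p := p) (Or.inl one_ne_zero))
  rw [one_rpow, mul_one] at hslope
  have hratio : Tendsto (fun k : ℕ => (k : ℝ) / (k + 1)) atTop (𝓝[≠] 1) := by
    refine tendsto_nhdsWithin_of_tendsto_nhds_of_eventually_within _
      (tendsto_natCast_div_add_atTop 1) (Eventually.of_forall fun k => ?_)
    have : (k : ℝ) < k + 1 := lt_add_one _
    exact (div_lt_one (by positivity)).2 this |>.ne
  refine (hslope.comp hratio).congr fun k => ?_
  have hk : (k : ℝ) + 1 ≠ 0 := by positivity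
  simp only [Function.comp_apply, slope_def_field, one_rpow]
  field_simp
  ring

theorem tendsto_sum_range_div_rpow_of_tendsto_mul_rpow {c : ℕ → ℝ} {s L : ℝ} (hs : s < 1)
    (hc : Tendsto (fun k : ℕ => c k * ((k : ℝ) + 1) ^ s) atTop (𝓝 L)) :
    Tendsto (fun n : ℕ => (∑ k ∈ range n, c k) / (n : ℝ) ^ (1 - s)) atTop
      (𝓝 (L / (1 - s))) := by
  set p := 1 - s
  have hp : 0 < p := sub_pos.2 hs
  set w : ℕ → ℝ := fun k => ((k : ℝ) + 1) ^ p - (k : ℝ) ^ p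
  have hw : ∀ k, 0 < w k := fun k =>
    sub_pos.2 (rpow_lt_rpow k.cast_nonneg (lt_add_one _) hp)
  have hw_sum (n : ℕ) : ∑ k ∈ range n, w k = (n : ℝ) ^ p := by
    simpa [w, zero_rpow hp.ne'] using sum_range_sub (fun k : ℕ => (k : ℝ) ^ p) n
  have hw_scaled (k : ℕ) :
      ((k : ℝ) + 1) ^ s * w k = ((k : ℝ) + 1) * (1 - ((k : ℝ) / (k + 1)) ^ p) := by
    have hk : (0 : ℝ) < k + 1 := by positivity
    have hs' : s = 1 - p := by ring
    simp only [w]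
    rw [div_rpow k.cast_nonneg hk.le, hs', rpow_sub hk, rpow_one]
    have := (rpow_pos_of_pos hk p).ne'
    field_simp
  have hratio : Tendsto (fun k => c k / w k) atTop (𝓝 (L / p)) := by
    refine (hc.div ((tendsto_natCast_add_one_mul_one_sub_rpow p).congr fun k =>
      (hw_scaled k).symm) hp.ne').congr fun k => ?_
    have := (rpow_pos_of_pos (by positivity : (0 : ℝ) < k + 1) s).ne'
    rw [Pi.div_apply, mul_comm _ (w k), mul_div_mul_right _ _ this]
  have hw_top : Tendsto (fun n => ∑ k ∈ range n, w k) atTop atTop :=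
    ((tendsto_rpow_atTop hp).comp tendsto_natCast_atTop_atTop).congr fun n => (hw_sum n).symm
  simpa only [hw_sum] using tendsto_sum_range_div_sum_range_of_tendsto_div hw hw_top hratio

theorem lrrw_vn_diffusive (α : ℝ) (hα0 : 0 ≤ α) (hα : α < 1 / 2)
    (a : ℕ → ℝ)
    (ha : ∀ k : ℕ, a k = Real.Gamma k * Real.Gamma (α + 1) / Real.Gamma ((k : ℝ) + α))
    (v : ℕ → ℝ) (hv : ∀ n : ℕ, v n = ∑ k ∈ Finset.Icc 1 n, (a k) ^ 2) :
    Tendsto (fun n : ℕ => v n / (n : ℝ) ^ (1 - 2 * α)) atTop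
      (nhds (Real.Gamma (α + 1) ^ 2 / (1 - 2 * α))) := by
  have hratio := ((tendsto_Gamma_mul_rpow_div_Gamma_add hα0).comp (tendsto_add_atTop_nat 1)).pow 2
    |>.const_mul (Gamma (α + 1) ^ 2)
  rw [one_pow, mul_one] at hratio
  have hterm : Tendsto (fun k : ℕ => a (k + 1) ^ 2 * ((k : ℝ) + 1) ^ (2 * α)) atTop
      (𝓝 (Gamma (α + 1) ^ 2)) := by
    refine hratio.congr fun k => ?_
    rw [Function.comp_apply, ha, mul_comm 2 α, rpow_mul (by positivity), rpow_two]
    push_cast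
    ring
  refine (tendsto_sum_range_div_rpow_of_tendsto_mul_rpow (by linarith) hterm).congr fun n => ?_
  rw [hv, range_eq_Ico, sum_Ico_add' (fun k => a k ^ 2), zero_add, Ico_add_one_right_eq_Icc]
end

section
/- For the LRRW with α > 1/2, the martingale M_n = a_n S_n − ω A_n is bounded in L², with sup_n E[M_n²] ≤ (γ+τ) · Σ_{k=0}^∞ (Γ(α+1)Γ(k+1)/Γ(k+α+1))², and hence converges almost surely and in L² to a random variable M. -/
/-!
For `n ≥ 1` the weights `a n = Γ(n) Γ(α+1) / Γ(n+α)` satisfy `a (n+1) (n+α) = a n * n`, which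
turns the increment `M (n+1) - M n` into `a (n+1) (X (n+1) - E[X (n+1) | F n])`. So `n ↦ M (n+1)`
is a martingale with orthogonal increments, and since `E[(X - E[X | F])²] ≤ E[X²] ≤ p + q` and
`E[M 1²] ≤ p + q`, we get `E[M n²] ≤ (p + q) ∑ a k²`. Bernoulli's inequality gives
`a (k+1) ≤ (k+1)^(-α)`, so the series converges for `α > 1/2`. The L²-bounded martingale converges
almost surely, and Fatou's lemma applied to `E[(M m - M n)²] = E[M m²] - E[M n²]` upgrades this to
convergence in L².
-/

open MeasureTheory ProbabilityTheory Filter Real Finset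
open scoped Topology

noncomputable def gammaWeight (α : ℝ) (n : ℕ) : ℝ := Gamma n * Gamma (α + 1) / Gamma (n + α)

lemma gammaWeight_one {α : ℝ} (hα : -1 < α) : gammaWeight α 1 = 1 := by
  have : Gamma (α + 1) ≠ 0 := (Gamma_pos_of_pos (by linarith)).ne'
  simp [gammaWeight, add_comm, this]

lemma gammaWeight_succ (α : ℝ) (k : ℕ) :
    gammaWeight α (k + 1) = Gamma (α + 1) * Gamma (k + 1) / Gamma (k + α + 1) := by
  rw [gammaWeight, Nat.cast_succ, add_right_comm, mul_comm]

lemma gammaWeight_succ_mul {α : ℝ} (hα : -1 < α) {n : ℕ} (hn : 1 ≤ n) :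
    gammaWeight α (n + 1) * (n + α) = gammaWeight α n * n := by
  have hn' : (1 : ℝ) ≤ n := by exact_mod_cast hn
  have hnα : 0 < (n : ℝ) + α := by linarith
  have hΓ : 0 < Gamma (n + α) := Gamma_pos_of_pos hnα
  rw [gammaWeight, gammaWeight, Nat.cast_succ, Gamma_add_one (by positivity),
    add_right_comm, Gamma_add_one hnα.ne']
  field_simp

lemma gammaWeight_weightedSum_succ_sub {α : ℝ} (hα : -1 < α) (κ : ℝ) (x : ℕ → ℝ) {n : ℕ}
    (hn : 1 ≤ n) :
    (gammaWeight α (n + 1) * ∑ k ∈ Icc 1 (n + 1), x k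
        - κ * ∑ k ∈ Icc 1 (n + 1), gammaWeight α k)
      - (gammaWeight α n * ∑ k ∈ Icc 1 n, x k - κ * ∑ k ∈ Icc 1 n, gammaWeight α k)
      = gammaWeight α (n + 1) * (x (n + 1) - (κ + α * (∑ k ∈ Icc 1 n, x k) / n)) := by
  have hn' : (n : ℝ) ≠ 0 := by positivity
  rw [sum_Icc_succ_top (by omega), sum_Icc_succ_top (by omega)]
  field_simp
  linear_combination (∑ k ∈ Icc 1 n, x k) * gammaWeight_succ_mul hα hn

lemma rpow_add_one_mul_le {x α : ℝ} (hx : 0 < x) (h0 : 0 ≤ α) (h1 : α ≤ 1) :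
    (x + 1) ^ α * x ≤ x ^ α * (x + α) := by
  have bernoulli := rpow_one_add_le_one_add_mul_self
    (le_trans (by norm_num) (by positivity : (0 : ℝ) ≤ 1 / x)) h0 h1
  rw [show 1 + 1 / x = (x + 1) / x by field_simp, div_rpow (by linarith) hx.le,
    div_le_iff₀ (by positivity)] at bernoulli
  calc (x + 1) ^ α * x ≤ (1 + α * (1 / x)) * x ^ α * x := by gcongr
    _ = x ^ α * (x + α) := by field_simp

lemma gammaWeight_succ_le_rpow {α : ℝ} (h0 : 0 ≤ α) (h1 : α ≤ 1) (k : ℕ) :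
    gammaWeight α (k + 1) ≤ ((k : ℝ) + 1) ^ (-α) := by
  induction k with
  | zero => simp [gammaWeight_one (by linarith : -1 < α)]
  | succ k ih =>
    have hx0 : (0 : ℝ) < k + 1 := by positivity
    have hrec : gammaWeight α (k + 1 + 1) = gammaWeight α (k + 1) * ((k + 1) / (k + 1 + α)) := by
      have h := gammaWeight_succ_mul (by linarith : -1 < α) (Nat.le_add_left 1 k)
      push_cast at h
      rw [mul_div_assoc', eq_div_iff (by positivity), h]
    calc gammaWeight α (k + 1 + 1) ≤ ((k : ℝ) + 1) ^ (-α) * ((k + 1) / (k + 1 + α)) := by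
          rw [hrec]; gcongr
      _ ≤ ((k : ℝ) + 1 + 1) ^ (-α) := by
          rw [rpow_neg hx0.le, rpow_neg (by positivity), inv_mul_eq_div, div_div,
            div_le_iff₀ (by positivity), ← div_eq_inv_mul, le_div_iff₀ (by positivity)]
          linarith [rpow_add_one_mul_le hx0 h0 h1]
      _ = ((k + 1 : ℕ) + 1 : ℝ) ^ (-α) := by push_cast; rfl

lemma summable_gammaWeight_succ_sq {α : ℝ} (h0 : 1 / 2 < α) (h1 : α ≤ 1) :
    Summable fun k : ℕ => gammaWeight α (k + 1) ^ 2 := by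
  have hp : Summable fun k : ℕ => ((k + 1 : ℕ) : ℝ) ^ (-(2 * α)) :=
    (summable_nat_add_iff 1).2 (summable_nat_rpow.2 (by linarith))
  refine hp.of_nonneg_of_le (fun k => sq_nonneg _) fun k => ?_
  calc gammaWeight α (k + 1) ^ 2 ≤ (((k : ℝ) + 1) ^ (-α)) ^ 2 :=
        pow_le_pow_left₀ (by rw [gammaWeight_succ]; positivity)
          (gammaWeight_succ_le_rpow (by linarith) h1 k) 2
    _ = ((k + 1 : ℕ) : ℝ) ^ (-(2 * α)) := by
        rw [← rpow_natCast, ← rpow_mul (by positivity)]; push_cast; ring_nf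

section L2

variable {Ω : Type*} {m m₀ : MeasurableSpace Ω} {μ : Measure Ω}

lemma integral_mul_eq_zero_of_condExp_eq_zero (hm : m ≤ m₀) [SigmaFinite (μ.trim hm)]
    {Z ξ : Ω → ℝ} (hZ : StronglyMeasurable[m] Z) (hZξ : Integrable (Z * ξ) μ)
    (hξ : Integrable ξ μ) (hξ0 : μ[ξ|m] =ᵐ[μ] 0) : ∫ ω, Z ω * ξ ω ∂μ = 0 := by
  calc ∫ ω, Z ω * ξ ω ∂μ = ∫ ω, μ[Z * ξ|m] ω ∂μ := (integral_condExp hm).symm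
    _ = ∫ ω, (Z * 0 : Ω → ℝ) ω ∂μ :=
        integral_congr_ae ((condExp_mul_of_stronglyMeasurable_left hZ hZξ hξ).trans
          ((EventuallyEq.refl _ Z).mul hξ0))
    _ = 0 := by simp

lemma integral_add_sq_of_condExp_eq_zero [IsFiniteMeasure μ] (hm : m ≤ m₀)
    {Z ξ : Ω → ℝ} (hZ : StronglyMeasurable[m] Z) (hZ2 : MemLp Z 2 μ) (hξ2 : MemLp ξ 2 μ)
    (hξ0 : μ[ξ|m] =ᵐ[μ] 0) :
    ∫ ω, (Z ω + ξ ω) ^ 2 ∂μ = ∫ ω, Z ω ^ 2 ∂μ + ∫ ω, ξ ω ^ 2 ∂μ := by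
  have hZξ : Integrable (fun ω => Z ω * ξ ω) μ := hZ2.integrable_mul hξ2
  have hcross := integral_mul_eq_zero_of_condExp_eq_zero hm hZ hZξ (hξ2.integrable one_le_two) hξ0
  have hfirst : Integrable (fun ω => Z ω ^ 2 + 2 * (Z ω * ξ ω)) μ :=
    hZ2.integrable_sq.add (hZξ.const_mul 2)
  simp_rw [add_sq, mul_assoc]
  rw [integral_add hfirst hξ2.integrable_sq, integral_add hZ2.integrable_sq (hZξ.const_mul 2),
    integral_const_mul, hcross, mul_zero, add_zero]

lemma condExp_sub_ae_eq_zero (hm : m ≤ m₀) [SigmaFinite (μ.trim hm)] {Y c : Ω → ℝ}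
    (hY : Integrable Y μ) (hc : StronglyMeasurable[m] c) (hYc : μ[Y|m] =ᵐ[μ] c) :
    μ[Y - c|m] =ᵐ[μ] 0 := by
  have hci : Integrable c μ := integrable_condExp.congr hYc
  refine (condExp_sub hY hci m).trans ?_
  rw [condExp_of_stronglyMeasurable hm hc hci]
  filter_upwards [hYc] with ω hω
  simp [hω]

lemma integral_sq_sub_le_of_condExp_ae_eq [IsFiniteMeasure μ] (hm : m ≤ m₀) {Y c : Ω → ℝ}
    (hY : MemLp Y 2 μ) (hc : StronglyMeasurable[m] c) (hYc : μ[Y|m] =ᵐ[μ] c) :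
    ∫ ω, (Y ω - c ω) ^ 2 ∂μ ≤ ∫ ω, Y ω ^ 2 ∂μ := by
  have hc2 : MemLp c 2 μ := (hY.condExp one_le_two).ae_eq hYc
  have h := integral_add_sq_of_condExp_eq_zero hm hc hc2 (hY.sub hc2)
    (condExp_sub_ae_eq_zero hm (hY.integrable one_le_two) hc hYc)
  simp only [Pi.sub_apply, add_sub_cancel] at h
  linarith [integral_nonneg (μ := μ) (f := fun ω => c ω ^ 2) fun ω => sq_nonneg _]

lemma MeasureTheory.Martingale.integral_sq_eq_add_integral_sq_sub {ι : Type*} [Preorder ι]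
    {ℱ : Filtration ι m₀} [IsFiniteMeasure μ] {f : ι → Ω → ℝ} (hf : Martingale f ℱ μ)
    (hf2 : ∀ i, MemLp (f i) 2 μ) {i j : ι} (hij : i ≤ j) :
    ∫ ω, f j ω ^ 2 ∂μ = ∫ ω, f i ω ^ 2 ∂μ + ∫ ω, (f j ω - f i ω) ^ 2 ∂μ := by
  simpa using integral_add_sq_of_condExp_eq_zero (ℱ.le i) (hf.stronglyMeasurable i) (hf2 i)
    ((hf2 j).sub (hf2 i))
    (condExp_sub_ae_eq_zero (ℱ.le i) (hf.integrable j) (hf.stronglyMeasurable i)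
      (hf.condExp_ae_eq hij))

lemma MeasureTheory.Martingale.integral_sq_le_sum [IsFiniteMeasure μ] {ℱ : Filtration ℕ m₀}
    {f : ℕ → Ω → ℝ} (hf : Martingale f ℱ μ) (hf2 : ∀ n, MemLp (f n) 2 μ) {v : ℕ → ℝ}
    (h0 : ∫ ω, f 0 ω ^ 2 ∂μ ≤ v 0)
    (hv : ∀ n, ∫ ω, (f (n + 1) ω - f n ω) ^ 2 ∂μ ≤ v (n + 1)) (n : ℕ) :
    ∫ ω, f n ω ^ 2 ∂μ ≤ ∑ k ∈ range (n + 1), v k := by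
  induction n with
  | zero => simpa using h0
  | succ n ih =>
    rw [hf.integral_sq_eq_add_integral_sq_sub hf2 n.le_succ, sum_range_succ]
    linarith [hv n]

lemma integral_le_of_ae_tendsto_of_eventually_integral_le {F : ℕ → Ω → ℝ} {G : Ω → ℝ} {ε : ℝ}
    (hF : ∀ n, Integrable (F n) μ) (hF0 : ∀ n, 0 ≤ᵐ[μ] F n)
    (hlim : ∀ᵐ ω ∂μ, Tendsto (fun n => F n ω) atTop (𝓝 (G ω)))
    (hε : ∀ᶠ n in atTop, ∫ ω, F n ω ∂μ ≤ ε) : ∫ ω, G ω ∂μ ≤ ε := by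
  obtain ⟨n, hn⟩ := hε.exists
  have hε0 : 0 ≤ ε := (integral_nonneg_of_ae (hF0 n)).trans hn
  have hG0 : 0 ≤ᵐ[μ] G := by
    filter_upwards [hlim, ae_all_iff.2 hF0] with ω hω h0
    exact ge_of_tendsto' hω h0
  rw [integral_eq_lintegral_of_nonneg_ae hG0
    (aestronglyMeasurable_of_tendsto_ae _ (fun n => (hF n).1) hlim)]
  refine ENNReal.toReal_le_of_le_ofReal hε0 ?_
  calc ∫⁻ ω, ENNReal.ofReal (G ω) ∂μ
      = ∫⁻ ω, liminf (fun n => ENNReal.ofReal (F n ω)) atTop ∂μ := by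
        refine lintegral_congr_ae ?_
        filter_upwards [hlim] with ω hω
        exact ((ENNReal.continuous_ofReal.tendsto _).comp hω).liminf_eq.symm
    _ ≤ liminf (fun n => ∫⁻ ω, ENNReal.ofReal (F n ω) ∂μ) atTop :=
        lintegral_liminf_le' fun n => (hF n).1.aemeasurable.ennreal_ofReal
    _ = liminf (fun n => ENNReal.ofReal (∫ ω, F n ω ∂μ)) atTop := by
        simp_rw [ofReal_integral_eq_lintegral_ofReal (hF _) (hF0 _)]
    _ ≤ ENNReal.ofReal ε :=
        liminf_le_of_frequently_le' (hε.mono fun n hn => ENNReal.ofReal_le_ofReal hn).frequently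

lemma eLpNorm_one_le_of_integral_sq_le [IsFiniteMeasure μ] {g : Ω → ℝ}
    (hg : Integrable (fun ω => g ω ^ 2) μ) {C : ℝ} (hC : ∫ ω, g ω ^ 2 ∂μ ≤ C) :
    eLpNorm g 1 μ ≤ ENNReal.ofReal (μ.real Set.univ + C) := by
  have habs (x : ℝ) : ‖x‖ ≤ 1 + x ^ 2 := by
    rw [Real.norm_eq_abs]; nlinarith [sq_abs x, sq_nonneg (|x| - 1)]
  rw [eLpNorm_one_eq_lintegral_enorm]
  calc ∫⁻ ω, ‖g ω‖ₑ ∂μ ≤ ∫⁻ ω, ENNReal.ofReal (1 + g ω ^ 2) ∂μ :=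
        lintegral_mono fun ω => by
          rw [← ofReal_norm]; exact ENNReal.ofReal_le_ofReal (habs _)
    _ = ENNReal.ofReal (∫ ω, (1 + g ω ^ 2) ∂μ) :=
        (ofReal_integral_eq_lintegral_ofReal ((integrable_const 1).add hg)
          (ae_of_all _ fun ω => add_nonneg zero_le_one (sq_nonneg (g ω)))).symm
    _ ≤ ENNReal.ofReal (μ.real Set.univ + C) := by
        rw [integral_add (integrable_const 1) hg, integral_const, smul_eq_mul, mul_one]
        gcongr

theorem MeasureTheory.Martingale.exists_ae_tendsto_and_tendsto_integral_sq [IsFiniteMeasure μ]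
    {ℱ : Filtration ℕ m₀} {f : ℕ → Ω → ℝ} (hf : Martingale f ℱ μ) (hf2 : ∀ n, MemLp (f n) 2 μ)
    {C : ℝ} (hC : ∀ n, ∫ ω, f n ω ^ 2 ∂μ ≤ C) :
    ∃ g : Ω → ℝ, (∀ᵐ ω ∂μ, Tendsto (fun n => f n ω) atTop (𝓝 (g ω))) ∧
      Tendsto (fun n => ∫ ω, (f n ω - g ω) ^ 2 ∂μ) atTop (𝓝 0) := by
  set s : ℕ → ℝ := fun n => ∫ ω, f n ω ^ 2 ∂μ
  have hbdd : BddAbove (Set.range s) := ⟨C, Set.forall_mem_range.2 hC⟩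
  have hmono : Monotone s := fun i j hij => by
    simp only [s, hf.integral_sq_eq_add_integral_sq_sub hf2 hij]
    linarith [integral_nonneg (μ := μ) (f := fun ω => (f j ω - f i ω) ^ 2) fun ω => sq_nonneg _]
  have hlim := hf.submartingale.ae_tendsto_limitProcess (R := (μ.real Set.univ + C).toNNReal)
    fun n => eLpNorm_one_le_of_integral_sq_le (hf2 n).integrable_sq (hC n)
  refine ⟨_, hlim, squeeze_zero (fun n => integral_nonneg fun ω => sq_nonneg _)
    (fun n => ?_) (by simpa using (tendsto_atTop_ciSup hmono hbdd).const_sub (⨆ n, s n))⟩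
  refine integral_le_of_ae_tendsto_of_eventually_integral_le
    (F := fun k ω => (f n ω - f k ω) ^ 2) (fun k => ((hf2 n).sub (hf2 k)).integrable_sq)
    (fun k => ae_of_all _ fun ω => sq_nonneg _) ?_ ?_
  · filter_upwards [hlim] with ω hω
    exact (tendsto_const_nhds.sub hω).pow 2
  · filter_upwards [eventually_ge_atTop n] with k hk
    have h := hf.integral_sq_eq_add_integral_sq_sub hf2 hk
    simp_rw [sub_sq_comm (f n _)]
    linarith [le_ciSup hbdd k]

theorem exists_tendsto_of_weighted_centred_increments [IsFiniteMeasure μ]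
    {ℱ : Filtration ℕ m₀} {M Y c : ℕ → Ω → ℝ} {w : ℕ → ℝ} {v : ℝ}
    (hM : StronglyAdapted ℱ M) (hM2 : ∀ n, MemLp (M n) 2 μ) (hY2 : ∀ n, MemLp (Y (n + 1)) 2 μ)
    (hc : ∀ n, StronglyMeasurable[ℱ n] (c n)) (hYc : ∀ n, μ[Y (n + 1)|ℱ n] =ᵐ[μ] c n)
    (hinc : ∀ n, M (n + 1) - M n = w (n + 1) • (Y (n + 1) - c n))
    (hM0 : ∫ ω, M 0 ω ^ 2 ∂μ ≤ v * w 0 ^ 2) (hYv : ∀ n, ∫ ω, Y (n + 1) ω ^ 2 ∂μ ≤ v)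
    (hw : Summable fun n => w n ^ 2) :
    (∀ n, ∫ ω, M n ω ^ 2 ∂μ ≤ v * ∑' k, w k ^ 2) ∧
      ∃ g : Ω → ℝ, (∀ᵐ ω ∂μ, Tendsto (fun n => M n ω) atTop (𝓝 (g ω))) ∧
        Tendsto (fun n => ∫ ω, (M n ω - g ω) ^ 2 ∂μ) atTop (𝓝 0) := by
  have hv : 0 ≤ v := (integral_nonneg fun ω => sq_nonneg (Y 1 ω)).trans (hYv 0)
  have hmart : Martingale M ℱ μ := by
    refine martingale_of_condExp_sub_eq_zero_nat hM (fun n => (hM2 n).integrable one_le_two)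
      fun n => ?_
    rw [hinc]
    refine (condExp_smul _ _ _).trans ?_
    filter_upwards [condExp_sub_ae_eq_zero (ℱ.le n) ((hY2 n).integrable one_le_two) (hc n)
      (hYc n)] with ω hω
    simp [hω]
  have hstep (n : ℕ) : ∫ ω, (M (n + 1) ω - M n ω) ^ 2 ∂μ ≤ v * w (n + 1) ^ 2 := by
    have h (ω : Ω) : M (n + 1) ω - M n ω = w (n + 1) * (Y (n + 1) ω - c n ω) := by
      simpa using congrFun (hinc n) ω
    simp_rw [h, mul_pow, integral_const_mul]
    rw [mul_comm v]
    gcongr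
    exact (integral_sq_sub_le_of_condExp_ae_eq (ℱ.le n) (hY2 n) (hc n) (hYc n)).trans (hYv n)
  have hbound (n : ℕ) : ∫ ω, M n ω ^ 2 ∂μ ≤ v * ∑' k, w k ^ 2 := by
    refine (hmart.integral_sq_le_sum hM2 (v := fun k => v * w k ^ 2) hM0 hstep n).trans ?_
    rw [← mul_sum]
    gcongr
    exact hw.sum_le_tsum _ fun k _ => sq_nonneg _
  exact ⟨hbound, hmart.exists_ae_tendsto_and_tendsto_integral_sq hM2 hbound⟩

end L2

def MeasureTheory.Filtration.shift {Ω : Type*} {m₀ : MeasurableSpace Ω} (ℱ : Filtration ℕ m₀) :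
    Filtration ℕ m₀ :=
  ⟨fun n => ℱ (n + 1), fun _ _ h => ℱ.mono (Nat.succ_le_succ h), fun n => ℱ.le (n + 1)⟩

section Trichotomous

variable {ι Ω : Type*} {m m₀ : MeasurableSpace Ω} {μ : Measure Ω}

lemma sum_ite_sub_sum_ite_of_trichotomous {s : Finset ι} {x : ι → ℝ}
    (hx : ∀ k, x k = 1 ∨ x k = -1 ∨ x k = 0) :
    ((∑ k ∈ s, if x k = 1 then 1 else 0) - ∑ k ∈ s, if x k = -1 then 1 else 0) = ∑ k ∈ s, x k := by
  rw [← sum_sub_distrib]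
  refine sum_congr rfl fun k _ => ?_
  rcases hx k with h | h | h <;> norm_num [h]

lemma sum_ite_add_sum_ite_le_card_of_trichotomous {s : Finset ι} {x : ι → ℝ}
    (hx : ∀ k, x k = 1 ∨ x k = -1 ∨ x k = 0) :
    ((∑ k ∈ s, if x k = 1 then 1 else 0) + ∑ k ∈ s, if x k = -1 then 1 else 0) ≤ (#s : ℝ) := by
  rw [← sum_add_distrib, card_eq_sum_ones, Nat.cast_sum, Nat.cast_one]
  refine sum_le_sum fun k _ => ?_
  rcases hx k with h | h | h <;> norm_num [h]

lemma indicator_sub_indicator_of_trichotomous {Y : Ω → ℝ}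
    (hY : ∀ ω, Y ω = 1 ∨ Y ω = -1 ∨ Y ω = 0) :
    {ω | Y ω = 1}.indicator (fun _ => (1 : ℝ)) - {ω | Y ω = -1}.indicator (fun _ => 1) = Y := by
  funext ω
  rcases hY ω with h | h | h <;> norm_num [Set.indicator_apply, h]

lemma indicator_add_indicator_of_trichotomous {Y : Ω → ℝ}
    (hY : ∀ ω, Y ω = 1 ∨ Y ω = -1 ∨ Y ω = 0) :
    {ω | Y ω = 1}.indicator (fun _ => (1 : ℝ)) + {ω | Y ω = -1}.indicator (fun _ => 1)
      = fun ω => Y ω ^ 2 := by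
  funext ω
  rcases hY ω with h | h | h <;> norm_num [Set.indicator_apply, h]

variable [IsFiniteMeasure μ] {Y : Ω → ℝ}

lemma memLp_of_trichotomous (hYm : AEStronglyMeasurable Y μ)
    (hY : ∀ ω, Y ω = 1 ∨ Y ω = -1 ∨ Y ω = 0) (p : ENNReal) : MemLp Y p μ :=
  MemLp.of_bound hYm 1 (ae_of_all _ fun ω => by rcases hY ω with h | h | h <;> simp [h])

lemma Measurable.measurableSet_setOf_eq (hYm : Measurable Y) (y : ℝ) :
    MeasurableSet {ω | Y ω = y} :=
  hYm (measurableSet_singleton y)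

lemma Measurable.integrable_indicator_setOf_eq (hYm : Measurable Y) (y v : ℝ) :
    Integrable ({ω | Y ω = y}.indicator fun _ => v) μ :=
  (integrable_const v).indicator (hYm.measurableSet_setOf_eq y)

lemma condExp_eq_sub_of_trichotomous (hYm : Measurable Y)
    (hY : ∀ ω, Y ω = 1 ∨ Y ω = -1 ∨ Y ω = 0) {f g : Ω → ℝ}
    (hf : μ[{ω | Y ω = 1}.indicator (fun _ => 1)|m] =ᵐ[μ] f)
    (hg : μ[{ω | Y ω = -1}.indicator (fun _ => 1)|m] =ᵐ[μ] g) :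
    μ[Y|m] =ᵐ[μ] f - g := by
  rw [← indicator_sub_indicator_of_trichotomous hY]
  exact (condExp_sub (hYm.integrable_indicator_setOf_eq 1 1)
    (hYm.integrable_indicator_setOf_eq (-1) 1) m).trans (hf.sub hg)

lemma integral_sq_le_of_trichotomous [IsProbabilityMeasure μ] (hm : m ≤ m₀) (hYm : Measurable Y)
    (hY : ∀ ω, Y ω = 1 ∨ Y ω = -1 ∨ Y ω = 0) {f g : Ω → ℝ}
    (hf : μ[{ω | Y ω = 1}.indicator (fun _ => 1)|m] =ᵐ[μ] f)
    (hg : μ[{ω | Y ω = -1}.indicator (fun _ => 1)|m] =ᵐ[μ] g) {C : ℝ}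
    (hC : ∀ ω, f ω + g ω ≤ C) :
    ∫ ω, Y ω ^ 2 ∂μ ≤ C := by
  have hsum := (condExp_add (m := m) (hYm.integrable_indicator_setOf_eq (μ := μ) 1 1)
    (hYm.integrable_indicator_setOf_eq (-1) 1)).trans (hf.add hg)
  rw [indicator_add_indicator_of_trichotomous hY] at hsum
  calc ∫ ω, Y ω ^ 2 ∂μ = ∫ ω, μ[fun ω => Y ω ^ 2|m] ω ∂μ := (integral_condExp hm).symm
    _ ≤ ∫ _, C ∂μ := by
        refine integral_mono_ae integrable_condExp (integrable_const C) ?_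
        filter_upwards [hsum] with ω hω
        rw [hω]; exact hC ω
    _ = C := by simp

lemma integral_sub_sq_of_trichotomous (hYm : Measurable Y)
    (hY : ∀ ω, Y ω = 1 ∨ Y ω = -1 ∨ Y ω = 0) (κ : ℝ) :
    ∫ ω, (Y ω - κ) ^ 2 ∂μ = (1 - 2 * κ) * μ.real {ω | Y ω = 1}
      + (1 + 2 * κ) * μ.real {ω | Y ω = -1} + κ ^ 2 * μ.real Set.univ := by
  have h (ω : Ω) : (Y ω - κ) ^ 2 = ({ω | Y ω = 1}.indicator (fun _ => 1 - 2 * κ) ω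
      + {ω | Y ω = -1}.indicator (fun _ => 1 + 2 * κ) ω) + κ ^ 2 := by
    rcases hY ω with h | h | h <;> norm_num [Set.indicator_apply, h] <;> ring
  have hfirst : Integrable (fun ω => {ω | Y ω = 1}.indicator (fun _ => 1 - 2 * κ) ω
      + {ω | Y ω = -1}.indicator (fun _ => 1 + 2 * κ) ω) μ :=
    (hYm.integrable_indicator_setOf_eq _ _).add (hYm.integrable_indicator_setOf_eq _ _)
  rw [integral_congr_ae (ae_of_all _ h), integral_add hfirst (integrable_const _),
    integral_add (hYm.integrable_indicator_setOf_eq _ _) (hYm.integrable_indicator_setOf_eq _ _),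
    integral_indicator_const _ (hYm.measurableSet_setOf_eq 1),
    integral_indicator_const _ (hYm.measurableSet_setOf_eq (-1)), integral_const]
  simp only [smul_eq_mul]
  ring

lemma integral_sub_sq_le_of_trichotomous [IsProbabilityMeasure μ] (hYm : Measurable Y)
    (hY : ∀ ω, Y ω = 1 ∨ Y ω = -1 ∨ Y ω = 0) {p q θ : ℝ} (hp : 0 ≤ p) (hq : 0 ≤ q)
    (hθ_ge : -1 ≤ θ) (hθ1 : θ ≤ 1) (h1 : μ {ω | Y ω = 1} = ENNReal.ofReal p)
    (h2 : μ {ω | Y ω = -1} = ENNReal.ofReal q) :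
    ∫ ω, (Y ω - (p - q) * (1 - θ)) ^ 2 ∂μ ≤ p + q := by
  rw [integral_sub_sq_of_trichotomous hYm hY, measureReal_def, measureReal_def, h1, h2,
    ENNReal.toReal_ofReal hp, ENNReal.toReal_ofReal hq, probReal_univ]
  nlinarith [mul_nonneg (sq_nonneg (p - q))
    (mul_nonneg (sub_nonneg.2 hθ1) (by linarith : 0 ≤ 1 + θ))]

-- `Np`, `Nm` count the past `+1` and `-1` steps of the walk and `n` is the current time.
lemma condExp_eq_and_integral_sq_le_of_transition [IsProbabilityMeasure μ] (hm : m ≤ m₀)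
    (hYm : Measurable Y) (hY : ∀ ω, Y ω = 1 ∨ Y ω = -1 ∨ Y ω = 0) {Np Nm S : Ω → ℝ}
    {p q θ n : ℝ} (hθ : 0 ≤ θ) (hpq : 0 ≤ p + q) (hn : 0 < n)
    (hS : ∀ ω, Np ω - Nm ω = S ω) (hN : ∀ ω, Np ω + Nm ω ≤ n)
    (h1 : μ[{ω | Y ω = 1}.indicator (fun _ => 1)|m]
      =ᵐ[μ] fun ω => (1 - θ) * p + θ * (p * Np ω + q * Nm ω) / n)
    (h2 : μ[{ω | Y ω = -1}.indicator (fun _ => 1)|m]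
      =ᵐ[μ] fun ω => (1 - θ) * q + θ * (q * Np ω + p * Nm ω) / n) :
    μ[Y|m] =ᵐ[μ] (fun ω => (p - q) * (1 - θ) + θ * (p - q) * S ω / n) ∧
      ∫ ω, Y ω ^ 2 ∂μ ≤ p + q := by
  refine ⟨(condExp_eq_sub_of_trichotomous hYm hY h1 h2).trans (.of_eq (funext fun ω => ?_)),
    integral_sq_le_of_trichotomous hm hYm hY h1 h2 fun ω => ?_⟩
  · simp only [Pi.sub_apply, ← hS]
    field_simp
    ring
  · have hratio : (Np ω + Nm ω) / n ≤ 1 := (div_le_one hn).2 (hN ω)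
    calc (1 - θ) * p + θ * (p * Np ω + q * Nm ω) / n + ((1 - θ) * q + θ * (q * Np ω + p * Nm ω) / n)
        = (1 - θ) * (p + q) + θ * (p + q) * ((Np ω + Nm ω) / n) := by field_simp; ring
      _ ≤ (1 - θ) * (p + q) + θ * (p + q) * 1 := by gcongr
      _ = p + q := by ring

end Trichotomous

theorem lrrw_martingale_L2_bounded_superdiffusive_general
    {Ω : Type*} [MeasurableSpace Ω] (μ : Measure Ω) [IsProbabilityMeasure μ]
    (p q r θ : ℝ) (hp : 0 ≤ p) (hq : 0 ≤ q) (hr : 0 ≤ r) (hpqr : p + q + r = 1)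
    (hθ0 : 0 ≤ θ) (hθ1 : θ < 1)
    (X : ℕ → Ω → ℝ) (hXmeas : ∀ n, StronglyMeasurable (X n))
    (hXval : ∀ n ω, X n ω = 1 ∨ X n ω = -1 ∨ X n ω = 0)
    (S : ℕ → Ω → ℝ) (hS : ∀ n ω, S n ω = ∑ k ∈ Finset.Icc 1 n, X k ω)
    (Np Nm : ℕ → Ω → ℝ)
    (hNp : ∀ n ω, Np n ω = ∑ k ∈ Finset.Icc 1 n, if X k ω = 1 then (1 : ℝ) else 0)
    (hNm : ∀ n ω, Nm n ω = ∑ k ∈ Finset.Icc 1 n, if X k ω = -1 then (1 : ℝ) else 0)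
    (hinit1 : μ {ω | X 1 ω = 1} = ENNReal.ofReal p)
    (hinit2 : μ {ω | X 1 ω = -1} = ENNReal.ofReal q)
    (hcond1 : ∀ n : ℕ, 1 ≤ n →
      μ[Set.indicator {ω | X (n + 1) ω = 1} (fun _ => (1 : ℝ)) |
          (MeasureTheory.Filtration.natural X hXmeas) n]
        =ᵐ[μ] fun ω => (1 - θ) * p + θ * (p * Np n ω + q * Nm n ω) / n)
    (hcond2 : ∀ n : ℕ, 1 ≤ n →
      μ[Set.indicator {ω | X (n + 1) ω = -1} (fun _ => (1 : ℝ)) |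
          (MeasureTheory.Filtration.natural X hXmeas) n]
        =ᵐ[μ] fun ω => (1 - θ) * q + θ * (q * Np n ω + p * Nm n ω) / n)
    (hα : 1 / 2 < θ * (p - q))
    (a : ℕ → ℝ)
    (ha : ∀ n : ℕ, a n = Real.Gamma n * Real.Gamma (θ * (p - q) + 1) /
      Real.Gamma ((n : ℝ) + θ * (p - q)))
    (A : ℕ → ℝ) (hA : ∀ n : ℕ, A n = ∑ k ∈ Finset.Icc 1 n, a k)
    (M : ℕ → Ω → ℝ)
    (hM : ∀ n ω, M n ω = a n * S n ω - (p - q) * (1 - θ) * A n) :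
    (∀ n : ℕ, ∫ ω, (M n ω) ^ 2 ∂μ ≤
      (θ * (p + q) + (1 - θ) * (p + q)) *
        ∑' k : ℕ, (Real.Gamma (θ * (p - q) + 1) * Real.Gamma ((k : ℝ) + 1) /
          Real.Gamma ((k : ℝ) + θ * (p - q) + 1)) ^ 2) ∧
    ∃ Mlim : Ω → ℝ,
      (∀ᵐ ω ∂μ, Tendsto (fun n : ℕ => M n ω) atTop (nhds (Mlim ω))) ∧
      Tendsto (fun n : ℕ => ∫ ω, (M n ω - Mlim ω) ^ 2 ∂μ) atTop (nhds 0) := by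
  set α := θ * (p - q)
  have hα1 : α ≤ 1 := by nlinarith
  obtain rfl : a = gammaWeight α := funext ha
  set F := Filtration.natural X hXmeas
  set c : ℕ → Ω → ℝ := fun n ω => (p - q) * (1 - θ) + α * S n ω / n
  have hX2 (n : ℕ) : MemLp (X n) 2 μ :=
    memLp_of_trichotomous (hXmeas n).aestronglyMeasurable (hXval n) 2
  have hS_eq (n : ℕ) : S n = ∑ k ∈ Icc 1 n, X k := funext fun ω => by simp [hS]
  have hSF (n : ℕ) : StronglyMeasurable[F n] (S n) := hS_eq n ▸ stronglyMeasurable_sum _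
    fun k hk => (Filtration.stronglyAdapted_natural hXmeas k).mono (F.mono (mem_Icc.1 hk).2)
  have hMF (n : ℕ) : StronglyMeasurable[F n] (M n) :=
    funext (hM n) ▸ ((hSF n).const_mul _).sub stronglyMeasurable_const
  have hM2 (n : ℕ) : MemLp (M n) 2 μ := funext (hM n) ▸
    ((hS_eq n ▸ memLp_finsetSum' _ fun k _ => hX2 k).const_mul _).sub (memLp_const _)
  have hcF (n : ℕ) : StronglyMeasurable[F n] (c n) :=
    stronglyMeasurable_const.add (((hSF n).const_mul α).mul_const _)
  have hstep (n : ℕ) (hn : 1 ≤ n) :=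
    condExp_eq_and_integral_sq_le_of_transition (F.le n) (hXmeas _).measurable (hXval _)
      (S := S n) hθ0 (by linarith) (by positivity)
      (fun ω => by rw [hNp, hNm, hS]; exact sum_ite_sub_sum_ite_of_trichotomous (hXval · ω))
      (fun ω => by simpa [hNp, hNm] using
        sum_ite_add_sum_ite_le_card_of_trichotomous (s := Icc 1 n) (hXval · ω))
      (hcond1 n hn) (hcond2 n hn)
  have hinc (n : ℕ) (hn : 1 ≤ n) :
      M (n + 1) - M n = gammaWeight α (n + 1) • (X (n + 1) - c n) := by
    funext ω
    simp only [Pi.sub_apply, Pi.smul_apply, smul_eq_mul, hM, hS, hA, c]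
    exact gammaWeight_weightedSum_succ_sub (by linarith) _ (X · ω) hn
  have hM1 : ∫ ω, M 1 ω ^ 2 ∂μ ≤ (p + q) * gammaWeight α 1 ^ 2 := by
    simpa [hM, hS, hA, gammaWeight_one (by linarith : -1 < α)] using
      integral_sub_sq_le_of_trichotomous (hXmeas 1).measurable (hXval 1) hp hq (by linarith) hθ1.le
        hinit1 hinit2
  -- `M` is a martingale only from time 1 on: `M 0 = 0`, whereas `∫ M 1 = α`.
  obtain ⟨hbound, g, hae, hL2⟩ := exists_tendsto_of_weighted_centred_increments
    (ℱ := F.shift) (M := fun n => M (n + 1)) (Y := fun n => X (n + 1)) (c := fun n => c (n + 1))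
    (w := fun n => gammaWeight α (n + 1)) (fun n => hMF (n + 1)) (fun n => hM2 (n + 1))
    (fun n => hX2 _) (fun n => hcF (n + 1)) (fun n => (hstep (n + 1) (by omega)).1)
    (fun n => hinc (n + 1) (by omega)) hM1 (fun n => (hstep (n + 1) (by omega)).2)
    (summable_gammaWeight_succ_sq hα hα1)
  refine ⟨fun n => ?_, g, hae.mono fun ω h => (tendsto_add_atTop_iff_nat 1).1 h,
    (tendsto_add_atTop_iff_nat 1).1 hL2⟩
  simp only [← gammaWeight_succ, show θ * (p + q) + (1 - θ) * (p + q) = p + q by ring]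
  cases n with
  | zero => simpa [hM, hS, hA] using mul_nonneg (by linarith) (tsum_nonneg fun k => sq_nonneg _)
  | succ n => exact hbound n

theorem lrrw_martingale_L2_bounded_superdiffusive
    {Ω : Type*} [MeasurableSpace Ω] (μ : Measure Ω) [IsProbabilityMeasure μ]
    (p q r θ : ℝ) (hp : 0 ≤ p) (hq : 0 ≤ q) (hr : 0 ≤ r) (hpqr : p + q + r = 1)
    (hθ0 : 0 ≤ θ) (hθ1 : θ < 1)
    (X : ℕ → Ω → ℝ) (hXmeas : ∀ n, StronglyMeasurable (X n))
    (hXval : ∀ n ω, X n ω = 1 ∨ X n ω = -1 ∨ X n ω = 0)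
    (hX0 : ∀ ω, X 0 ω = 0)
    (S : ℕ → Ω → ℝ) (hS : ∀ n ω, S n ω = ∑ k ∈ Finset.Icc 1 n, X k ω)
    (Np Nm : ℕ → Ω → ℝ)
    (hNp : ∀ n ω, Np n ω = ∑ k ∈ Finset.Icc 1 n, if X k ω = 1 then (1 : ℝ) else 0)
    (hNm : ∀ n ω, Nm n ω = ∑ k ∈ Finset.Icc 1 n, if X k ω = -1 then (1 : ℝ) else 0)
    (hinit1 : μ {ω | X 1 ω = 1} = ENNReal.ofReal p)
    (hinit2 : μ {ω | X 1 ω = -1} = ENNReal.ofReal q)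
    (hcond1 : ∀ n : ℕ, 1 ≤ n →
      μ[Set.indicator {ω | X (n + 1) ω = 1} (fun _ => (1 : ℝ)) |
          (MeasureTheory.Filtration.natural X hXmeas) n]
        =ᵐ[μ] fun ω => (1 - θ) * p + θ * (p * Np n ω + q * Nm n ω) / n)
    (hcond2 : ∀ n : ℕ, 1 ≤ n →
      μ[Set.indicator {ω | X (n + 1) ω = -1} (fun _ => (1 : ℝ)) |
          (MeasureTheory.Filtration.natural X hXmeas) n]
        =ᵐ[μ] fun ω => (1 - θ) * q + θ * (q * Np n ω + p * Nm n ω) / n)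
    (hα : 1 / 2 < θ * (p - q))
    (a : ℕ → ℝ)
    (ha : ∀ n : ℕ, a n = Real.Gamma n * Real.Gamma (θ * (p - q) + 1) /
      Real.Gamma ((n : ℝ) + θ * (p - q)))
    (A : ℕ → ℝ) (hA : ∀ n : ℕ, A n = ∑ k ∈ Finset.Icc 1 n, a k)
    (M : ℕ → Ω → ℝ)
    (hM : ∀ n ω, M n ω = a n * S n ω - (p - q) * (1 - θ) * A n) :
    (∀ n : ℕ, ∫ ω, (M n ω) ^ 2 ∂μ ≤
      (θ * (p + q) + (1 - θ) * (p + q)) *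
        ∑' k : ℕ, (Real.Gamma (θ * (p - q) + 1) * Real.Gamma ((k : ℝ) + 1) /
          Real.Gamma ((k : ℝ) + θ * (p - q) + 1)) ^ 2) ∧
    ∃ Mlim : Ω → ℝ,
      (∀ᵐ ω ∂μ, Tendsto (fun n : ℕ => M n ω) atTop (nhds (Mlim ω))) ∧
      Tendsto (fun n : ℕ => ∫ ω, (M n ω - Mlim ω) ^ 2 ∂μ) atTop (nhds 0) :=
  lrrw_martingale_L2_bounded_superdiffusive_general μ p q r θ hp hq hr hpqr hθ0 hθ1 X hXmeas hXval S
    hS Np Nm hNp hNm hinit1 hinit2 hcond1 hcond2 hα a ha A hA M hM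
end
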